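/- Fix c ∈ (0, 1] and let t be uniformly distributed on the unit sphere S². Define F(t) = (1/2)(1 + t₁² + (1−c)(t₂² + t₃²)). Then F takes values in [(2−c)/2, 1], and its probability density function is f(F) = 1/√(c(2F − 2 + c)) for F ∈ ((2−c)/2, 1] and 0 otherwise. -/

import Mathlib

/-!
On the unit sphere `t₁² + t₂² + t₃² = 1`, so `F = (2 - c)/2 + (c/2) t₁²` depends on `t₁` alone.
By Archimedes' hat-box theorem the uniform measure gives the band `{t₁² < b}` mass `√b` for
`0 < b ≤ 1`. Hence `P(F < x) = √((2x - 2 + c)/c)` on `((2 - c)/2, 1]`, which is the integral of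
the stated density, and finite measures on `ℝ` agreeing on all half-lines `(-∞, x)` coincide.

`Measure.toSphere` gives a set of directions `3 ×` the volume of the cone it spans in the unit
ball. For the band this cone has volume `(4π/3)√b`: its slice at height `x₀ = r` is an annulus
of area `π(1 - r²/b)` for `|r| ≤ √b`.
-/

open MeasureTheory Metric Set

noncomputable def sphereUniform :
    Measure (sphere (0 : EuclideanSpace ℝ (Fin 3)) 1) :=
  (((volume : Measure (EuclideanSpace ℝ (Fin 3))).toSphere) univ)⁻¹ •
    ((volume : Measure (EuclideanSpace ℝ (Fin 3))).toSphere)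

/-- Phase-flip teleportation fidelity F(t) = (1 + t₁² + (1−c)(t₂²+t₃²))/2. -/
noncomputable def Fpf (c : ℝ) (t : sphere (0 : EuclideanSpace ℝ (Fin 3)) 1) : ℝ :=
  (1 / 2) * (1 + ((t : EuclideanSpace ℝ (Fin 3)) 0) ^ 2 +
    (1 - c) * (((t : EuclideanSpace ℝ (Fin 3)) 1) ^ 2 +
               ((t : EuclideanSpace ℝ (Fin 3)) 2) ^ 2))

open WithLp

open scoped ENNReal Real Pointwise

theorem MeasureTheory.Measure.ext_of_Iio_real (μ ν : Measure ℝ) [IsFiniteMeasure μ]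
    (h : ∀ x, μ (Iio x) = ν (Iio x)) : μ = ν := by
  refine ext_of_generate_finite _ (BorelSpace.measurable_eq.trans (borel_eq_generateFrom_Iio ℝ))
    isPiSystem_Iio (by rintro _ ⟨x, rfl⟩; exact h x) ?_
  have hmono : Monotone fun n : ℕ => Iio (n : ℝ) := fun _ _ hmn =>
    Iio_subset_Iio (by exact_mod_cast hmn)
  have hunion : ⋃ n : ℕ, Iio (n : ℝ) = univ :=
    eq_univ_of_forall fun x => mem_iUnion.2 (exists_nat_gt x)
  rw [← hunion, hmono.measure_iUnion, hmono.measure_iUnion]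
  simp only [h]

theorem lintegral_Ioc_ofReal_eq_sub_of_hasDerivAt {f f' : ℝ → ℝ} {a b : ℝ} (hab : a ≤ b)
    (hcont : ContinuousOn f (Icc a b)) (hderiv : ∀ x ∈ Ioo a b, HasDerivAt f (f' x) x)
    (hpos : ∀ x ∈ Ioo a b, 0 ≤ f' x) :
    ∫⁻ x in Ioc a b, ENNReal.ofReal (f' x) = ENNReal.ofReal (f b - f a) := by
  have hint := intervalIntegral.integrableOn_deriv_of_nonneg hcont hderiv hpos
  rw [← intervalIntegral.integral_eq_sub_of_hasDerivAt_of_le hab hcont hderiv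
      (intervalIntegrable_iff_integrableOn_Ioc_of_le hab |>.2 hint),
    intervalIntegral.integral_of_le hab, ofReal_integral_eq_lintegral_ofReal hint]
  rw [← Measure.restrict_congr_set Ioo_ae_eq_Ioc]
  exact ae_restrict_of_forall_mem measurableSet_Ioo hpos

theorem lintegral_ofReal_one_sub_sq_div {b : ℝ} (hb : 0 < b) :
    ∫⁻ r, ENNReal.ofReal (1 - r ^ 2 / b) = ENNReal.ofReal (4 / 3 * √b) := by
  set u := √b
  have hu0 : 0 < u := Real.sqrt_pos.2 hb
  have hub : u ^ 2 = b := Real.sq_sqrt hb.le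
  have hsupp : (fun r => ENNReal.ofReal (1 - r ^ 2 / b))
      = (Ioc (-u) u).indicator fun r => ENNReal.ofReal (1 - r ^ 2 / b) := by
    ext r
    by_cases hr : r ∈ Ioc (-u) u
    · rw [indicator_of_mem hr]
    · rw [indicator_of_notMem hr, ENNReal.ofReal_eq_zero, sub_nonpos, le_div_iff₀ hb, one_mul,
        ← hub]
      rw [mem_Ioc, not_and_or, not_lt, not_le] at hr
      rcases hr with h | h <;> nlinarith
  rw [hsupp, lintegral_indicator measurableSet_Ioc,
    lintegral_Ioc_ofReal_eq_sub_of_hasDerivAt (f := fun r => r - r ^ 3 / (3 * b)) (by linarith)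
      (by fun_prop) (fun r _ => ?deriv) (fun r hr => ?pos)]
  · congr 1
    rw [← hub]
    field_simp
    ring
  · refine ((hasDerivAt_id' r).fun_sub ((hasDerivAt_pow 3 r).div_const (3 * b))).congr_deriv ?_
    field_simp
    ring
  · rw [sub_nonneg, div_le_one hb, ← hub]
    nlinarith [hr.1, hr.2]

theorem EuclideanSpace.volume_eq_lintegral_volume_slice {n : ℕ}
    {s : Set (EuclideanSpace ℝ (Fin (n + 1)))} (hs : MeasurableSet s) :
    volume s = ∫⁻ r, volume {y : EuclideanSpace ℝ (Fin n) | toLp 2 (Fin.cons r (ofLp y)) ∈ s} := by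
  let e := (MeasurableEquiv.piFinSuccAbove (fun _ : Fin (n + 1) => ℝ) 0).symm
  have ht : MeasurableSet (toLp 2 ⁻¹' s) := (PiLp.volume_preserving_toLp _).measurable hs
  rw [← (PiLp.volume_preserving_toLp _).measure_preimage hs.nullMeasurableSet,
    ← (volume_preserving_piFinSuccAbove (fun _ : Fin (n + 1) => ℝ) 0).symm.measure_preimage
      ht.nullMeasurableSet, Measure.volume_eq_prod, Measure.prod_apply (e.measurable ht)]
  refine lintegral_congr fun r => ?_
  convert ((PiLp.volume_preserving_ofLp _).measure_preimage
    (measurable_prodMk_left (e.measurable ht)).nullMeasurableSet).symm using 2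
  ext y
  simp [e, Fin.consEquiv]

theorem EuclideanSpace.norm_toLp_cons_sq {n : ℕ} (r : ℝ) (y : EuclideanSpace ℝ (Fin n)) :
    ‖(toLp 2 (Fin.cons r (ofLp y)) : EuclideanSpace ℝ (Fin (n + 1)))‖ ^ 2 = r ^ 2 + ‖y‖ ^ 2 := by
  simp [EuclideanSpace.real_norm_sq_eq, Fin.sum_univ_succ]

theorem EuclideanSpace.volume_annulus_fin_two {a b : ℝ} (ha : 0 ≤ a) :
    volume {y : EuclideanSpace ℝ (Fin 2) | a < ‖y‖ ^ 2 ∧ ‖y‖ ^ 2 < b}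
      = ENNReal.ofReal (π * (b - a)) := by
  rcases le_or_gt b a with hba | hab
  · have hempty : {y : EuclideanSpace ℝ (Fin 2) | a < ‖y‖ ^ 2 ∧ ‖y‖ ^ 2 < b} = ∅ :=
      eq_empty_of_forall_notMem fun y hy => (hy.1.trans hy.2).not_ge hba
    rw [hempty, measure_empty, eq_comm, ENNReal.ofReal_eq_zero]
    exact mul_nonpos_of_nonneg_of_nonpos Real.pi_nonneg (by linarith)
  · have hset : {y : EuclideanSpace ℝ (Fin 2) | a < ‖y‖ ^ 2 ∧ ‖y‖ ^ 2 < b}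
        = ball 0 √b \ closedBall 0 √a := by
      ext y
      simp only [mem_ofPred_eq, mem_sdiff, mem_ball_zero_iff, mem_closedBall_zero_iff, not_le,
        Real.lt_sqrt (norm_nonneg y), Real.sqrt_lt ha (norm_nonneg y), and_comm]
    rw [hset, measure_sdiff (closedBall_subset_ball (Real.sqrt_lt_sqrt ha hab))
      measurableSet_closedBall.nullMeasurableSet measure_closedBall_lt_top.ne,
      EuclideanSpace.volume_ball_fin_two, EuclideanSpace.volume_closedBall_fin_two,
      ← ENNReal.sub_mul fun _ _ => ENNReal.ofReal_ne_top, ← ENNReal.ofReal_pow (Real.sqrt_nonneg _),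
      ← ENNReal.ofReal_pow (Real.sqrt_nonneg _), Real.sq_sqrt ha, Real.sq_sqrt (ha.trans hab.le),
      ← ENNReal.ofReal_sub _ ha, ← ENNReal.ofReal_mul (by linarith), mul_comm]

theorem EuclideanSpace.volume_cone_fin_three {b : ℝ} (hb0 : 0 < b) (hb1 : b ≤ 1) :
    volume {x : EuclideanSpace ℝ (Fin 3) | ‖x‖ < 1 ∧ x 0 ^ 2 < b * ‖x‖ ^ 2}
      = ENNReal.ofReal (π * 4 / 3) * ENNReal.ofReal √b := by
  have hmeas : MeasurableSet {x : EuclideanSpace ℝ (Fin 3) | ‖x‖ < 1 ∧ x 0 ^ 2 < b * ‖x‖ ^ 2} := by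
    measurability
  have hslice (r : ℝ) :
      {y : EuclideanSpace ℝ (Fin 2) | toLp 2 (Fin.cons r (ofLp y)) ∈
          {x : EuclideanSpace ℝ (Fin 3) | ‖x‖ < 1 ∧ x 0 ^ 2 < b * ‖x‖ ^ 2}}
        = {y | r ^ 2 * (1 - b) / b < ‖y‖ ^ 2 ∧ ‖y‖ ^ 2 < 1 - r ^ 2} := by
    ext y
    have hn := EuclideanSpace.norm_toLp_cons_sq r y
    simp only [mem_ofPred_eq, ← sq_lt_one_iff₀ (norm_nonneg _), hn, div_lt_iff₀ hb0, Fin.cons_zero]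
    constructor <;> rintro ⟨h₁, h₂⟩ <;> constructor <;> linarith
  have hannulus (r : ℝ) :
      volume {y : EuclideanSpace ℝ (Fin 2) | r ^ 2 * (1 - b) / b < ‖y‖ ^ 2 ∧ ‖y‖ ^ 2 < 1 - r ^ 2}
        = ENNReal.ofReal π * ENNReal.ofReal (1 - r ^ 2 / b) := by
    rw [EuclideanSpace.volume_annulus_fin_two
      (div_nonneg (mul_nonneg (sq_nonneg r) (sub_nonneg.2 hb1)) hb0.le),
      ← ENNReal.ofReal_mul Real.pi_nonneg]
    congr 1
    field_simp
    ring
  simp_rw [EuclideanSpace.volume_eq_lintegral_volume_slice (n := 2) hmeas, hslice, hannulus,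
    lintegral_const_mul' _ _ ENNReal.ofReal_ne_top, lintegral_ofReal_one_sub_sq_div hb0,
    ← ENNReal.ofReal_mul Real.pi_nonneg, ← ENNReal.ofReal_mul (by positivity : 0 ≤ π * 4 / 3)]
  ring_nf

theorem EuclideanSpace.Ioo_smul_image_sphere_sq_apply_lt {ι : Type*} [Fintype ι] (i : ι) (b : ℝ) :
    Ioo (0 : ℝ) 1 • ((↑) '' {t : sphere (0 : EuclideanSpace ℝ ι) 1 |
        (t : EuclideanSpace ℝ ι) i ^ 2 < b})
      = {x : EuclideanSpace ℝ ι | ‖x‖ < 1 ∧ x i ^ 2 < b * ‖x‖ ^ 2} := by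
  ext x
  simp only [mem_smul, mem_image, mem_ofPred_eq, Subtype.exists, mem_sphere_zero_iff_norm]
  constructor
  · rintro ⟨r, ⟨hr0, hr1⟩, _, ⟨t, ht, hti, rfl⟩, rfl⟩
    have hnorm : ‖r • t‖ = r := by rw [norm_smul, ht, mul_one, Real.norm_of_nonneg hr0.le]
    refine ⟨by rwa [hnorm], ?_⟩
    rw [hnorm, PiLp.smul_apply, smul_eq_mul, mul_pow, mul_comm b]
    exact mul_lt_mul_of_pos_left hti (by positivity)
  · rintro ⟨hx1, hxi⟩
    have hx0 : 0 < ‖x‖ := by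
      by_contra! h
      rw [norm_le_zero_iff.1 h] at hxi
      simp at hxi
    refine ⟨‖x‖, ⟨hx0, hx1⟩, _, ⟨‖x‖⁻¹ • x, ?_, ?_, rfl⟩, smul_inv_smul₀ hx0.ne' x⟩
    · rw [norm_smul, norm_inv, norm_norm, inv_mul_cancel₀ hx0.ne']
    · rw [PiLp.smul_apply, smul_eq_mul, mul_pow, inv_pow, inv_mul_lt_iff₀ (by positivity),
        mul_comm]
      exact hxi

theorem EuclideanSpace.sq_apply_le_one_of_mem_sphere {ι : Type*} [Fintype ι]
    (t : sphere (0 : EuclideanSpace ℝ ι) 1) (i : ι) : (t : EuclideanSpace ℝ ι) i ^ 2 ≤ 1 := by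
  have h := PiLp.norm_apply_le (t : EuclideanSpace ℝ ι) i
  rw [norm_eq_of_mem_sphere, Real.norm_eq_abs] at h
  rw [← sq_abs]
  exact pow_le_one₀ (abs_nonneg _) h

theorem toSphere_sq_apply_zero_lt {b : ℝ} (hb0 : 0 < b) (hb1 : b ≤ 1) :
    (volume : Measure (EuclideanSpace ℝ (Fin 3))).toSphere
        {t | (t : EuclideanSpace ℝ (Fin 3)) 0 ^ 2 < b}
      = (volume : Measure (EuclideanSpace ℝ (Fin 3))).toSphere univ * ENNReal.ofReal √b := by
  rw [Measure.toSphere_apply' _ (by measurability), Measure.toSphere_apply_univ,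
    EuclideanSpace.Ioo_smul_image_sphere_sq_apply_lt, EuclideanSpace.volume_cone_fin_three hb0 hb1,
    EuclideanSpace.volume_ball_fin_three, ENNReal.ofReal_one, one_pow, one_mul, mul_assoc]

instance : IsProbabilityMeasure sphereUniform := by
  have : NeZero (volume : Measure (EuclideanSpace ℝ (Fin 3))).toSphere :=
    ⟨Measure.toSphere_ne_zero _⟩
  exact isProbabilityMeasureSMul

theorem sphereUniform_sq_apply_zero_lt (b : ℝ) :
    sphereUniform {t | (t : EuclideanSpace ℝ (Fin 3)) 0 ^ 2 < b}
      = ENNReal.ofReal √(min b 1) := by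
  rcases le_or_gt b 0 with hb0 | hb0
  · have hempty : {t : sphere (0 : EuclideanSpace ℝ (Fin 3)) 1 |
        (t : EuclideanSpace ℝ (Fin 3)) 0 ^ 2 < b} = ∅ :=
      eq_empty_of_forall_notMem fun t ht => (sq_nonneg _).not_gt (ht.trans_le hb0)
    rw [hempty, measure_empty, Real.sqrt_eq_zero'.2 ((min_le_left b 1).trans hb0),
      ENNReal.ofReal_zero]
  rcases le_or_gt b 1 with hb1 | hb1
  · rw [sphereUniform, Measure.smul_apply, smul_eq_mul, toSphere_sq_apply_zero_lt hb0 hb1,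
      ← mul_assoc, ENNReal.inv_mul_cancel
        (Measure.measure_univ_ne_zero.2 (Measure.toSphere_ne_zero _)) (measure_ne_top _ _),
      one_mul, min_eq_left hb1]
  · have huniv : {t : sphere (0 : EuclideanSpace ℝ (Fin 3)) 1 |
        (t : EuclideanSpace ℝ (Fin 3)) 0 ^ 2 < b} = univ :=
      eq_univ_of_forall fun t => (EuclideanSpace.sq_apply_le_one_of_mem_sphere t 0).trans_lt hb1
    rw [huniv, measure_univ, min_eq_right hb1.le, Real.sqrt_one, ENNReal.ofReal_one]

theorem Fpf_eq_add_mul_sq (c : ℝ) (t : sphere (0 : EuclideanSpace ℝ (Fin 3)) 1) :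
    Fpf c t = (2 - c) / 2 + c / 2 * (t : EuclideanSpace ℝ (Fin 3)) 0 ^ 2 := by
  have h := EuclideanSpace.real_norm_sq_eq (t : EuclideanSpace ℝ (Fin 3))
  rw [norm_eq_of_mem_sphere, Fin.sum_univ_three] at h
  rw [Fpf]
  linear_combination (c - 1) / 2 * h

theorem lintegral_Ioc_ofReal_one_div_sqrt {c x : ℝ} (hc : 0 < c) (hx : (2 - c) / 2 ≤ x) :
    ∫⁻ F in Ioc ((2 - c) / 2) x, ENNReal.ofReal (1 / √(c * (2 * F - 2 + c)))
      = ENNReal.ofReal √((2 * x - 2 + c) / c) := by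
  have hderiv (F : ℝ) (hF : F ∈ Ioo ((2 - c) / 2) x) :
      HasDerivAt (fun F => √((2 * F - 2 + c) / c)) (1 / √(c * (2 * F - 2 + c))) F := by
    have hpos : 0 < (2 * F - 2 + c) / c := div_pos (by linarith [hF.1]) hc
    have hinner : HasDerivAt (fun F => (2 * F - 2 + c) / c) (2 / c) F := by
      simpa using (((hasDerivAt_id' F).const_mul 2).sub_const 2 |>.add_const c).div_const c
    refine (hinner.sqrt hpos.ne').congr_deriv ?_
    rw [show c * (2 * F - 2 + c) = c ^ 2 * ((2 * F - 2 + c) / c) by field_simp,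
      Real.sqrt_mul (sq_nonneg c), Real.sqrt_sq hc.le]
    field_simp
  rw [lintegral_Ioc_ofReal_eq_sub_of_hasDerivAt hx (by fun_prop) hderiv
    (fun F _ => by positivity), show 2 * ((2 - c) / 2) - 2 + c = 0 by ring, zero_div, Real.sqrt_zero, sub_zero]

theorem withDensity_phaseFlip_apply_Iio {c : ℝ} (hc : 0 < c) (x : ℝ) :
    volume.withDensity (fun F => ENNReal.ofReal
        (if F ∈ Ioc ((2 - c) / 2) 1 then 1 / √(c * (2 * F - 2 + c)) else 0)) (Iio x)
      = ENNReal.ofReal √(min ((2 * x - 2 + c) / c) 1) := by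
  have hind : (fun F => ENNReal.ofReal
        (if F ∈ Ioc ((2 - c) / 2) 1 then 1 / √(c * (2 * F - 2 + c)) else 0))
      = (Ioc ((2 - c) / 2) 1).indicator fun F => ENNReal.ofReal (1 / √(c * (2 * F - 2 + c))) := by
    ext F
    split_ifs with hF <;> simp [hF]
  rw [withDensity_apply _ measurableSet_Iio, Measure.restrict_congr_set Iio_ae_eq_Iic, hind,
    lintegral_indicator measurableSet_Ioc, Measure.restrict_restrict measurableSet_Ioc,
    Ioc_inter_Iic]
  rcases le_or_gt x ((2 - c) / 2) with hxa | hax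
  · rw [Ioc_eq_empty (min_le_right 1 x |>.trans hxa).not_gt, Measure.restrict_empty,
      lintegral_zero_measure, Real.sqrt_eq_zero'.2 ((min_le_left _ _).trans
        (div_nonpos_of_nonpos_of_nonneg (by linarith) hc.le)), ENNReal.ofReal_zero]
  rcases le_or_gt x 1 with hx1 | hx1
  · rw [min_eq_right hx1, lintegral_Ioc_ofReal_one_div_sqrt hc hax.le,
      min_eq_left ((div_le_one hc).2 (by linarith))]
  · rw [min_eq_left hx1.le, lintegral_Ioc_ofReal_one_div_sqrt hc (by linarith),
      min_eq_right ((le_div_iff₀ hc).2 (by linarith))]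
    congr 2
    field_simp
    ring

/-- For c ∈ (0,1], F takes values in [(2−c)/2, 1] and has density
1/√(c(2F−2+c)) on ((2−c)/2, 1] and 0 outside. -/
theorem phase_flip_fidelity_distribution (c : ℝ) (hc : c ∈ Ioc (0 : ℝ) 1) :
    (∀ t : sphere (0 : EuclideanSpace ℝ (Fin 3)) 1,
        Fpf c t ∈ Icc ((2 - c) / 2) 1) ∧
    Measure.map (Fpf c) sphereUniform
      = volume.withDensity (fun F =>
          ENNReal.ofReal
            (if F ∈ Ioc ((2 - c) / 2) 1
              then 1 / Real.sqrt (c * (2 * F - 2 + c)) else 0)) := by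
  have hc0 : 0 < c := hc.1
  refine ⟨fun t => ?_, ?_⟩
  · have h₀ := sq_nonneg ((t : EuclideanSpace ℝ (Fin 3)) 0)
    have h₁ := EuclideanSpace.sq_apply_le_one_of_mem_sphere t 0
    rw [Fpf_eq_add_mul_sq]
    constructor <;> nlinarith
  have hFpf : Continuous (Fpf c) := by
    unfold Fpf
    fun_prop
  have hpre (x : ℝ) : Fpf c ⁻¹' Iio x
      = {t : sphere (0 : EuclideanSpace ℝ (Fin 3)) 1 |
          (t : EuclideanSpace ℝ (Fin 3)) 0 ^ 2 < (2 * x - 2 + c) / c} := by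
    ext t
    rw [mem_preimage, mem_Iio, Fpf_eq_add_mul_sq, mem_ofPred_eq, lt_div_iff₀ hc0]
    constructor <;> intro h <;> linarith
  refine Measure.ext_of_Iio_real _ _ fun x => ?_
  rw [Measure.map_apply hFpf.measurable measurableSet_Iio, hpre, sphereUniform_sq_apply_zero_lt,
    withDensity_phaseFlip_apply_Iio hc0]
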